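/- arXiv:1904.03503 — 2 statements merged into one kernel-verified Lean document; each statement's English description precedes it below -/
import Mathlib

section
/- Let L be a number field, Γ an order of L, K ⊆ L a subfield with ring of integers O_K, n = [L:K], and R = M_n(O_K). There exists an injective map from the set of Γ-structures on R (ring homomorphisms Γ → R modulo conjugation by units of R) into the product of the set of ring homomorphisms K → L with the set C_Γ of equivalence classes of fractional ideals of Γ. -/
open NumberField

/-- Two unital ring homomorphisms `A → B` are conjugate if they differ by conjugation
by a unit of `B`.  A `Γ`-structure on `B` is an equivalence class for this relation. -/
def ConjRel (A B : Type*) [Ring A] [Ring B] (ρ ρ' : A →+* B) : Prop :=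
  ∃ u : Bˣ, ∀ a : A, ρ' a = ↑u * ρ a * ↑u⁻¹

/-- The fractional ideals of a subring `Γ` of a field `L`: the nonzero finitely
generated `Γ`-submodules of `L`. -/
def FractionalIdealOf (L : Type*) [Field L] (Γ : Subring L) : Type _ :=
  {I : Submodule Γ L // I ≠ ⊥ ∧ I.FG}

/-- Two fractional ideals `I, I'` of `Γ` are equivalent if `I' = x·I` for some
nonzero `x ∈ L`.  `C_Γ` is the set of equivalence classes, i.e. `Quot` of this
relation. -/
def FracIdealRel (L : Type*) [Field L] (Γ : Subring L)
    (I I' : FractionalIdealOf L Γ) : Prop :=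
  ∃ x : L, x ≠ 0 ∧ ∀ y : L, y ∈ I'.1 ↔ ∃ z ∈ I.1, y = x * z

/-!
Since `ℚ Γ = L`, a `Γ`-structure `ρ` extends uniquely to a ring map `ℓ : L → Mₙ(K)`, and comparing
`ℚ`-dimensions shows that `x ↦ ℓ(x) e₀` is a bijection `L → Kⁿ`. Hence the scalars `c ∈ K` act on
`Kⁿ` through a unique embedding `σ : K → L` (`ℓ (σ c) = c`), and `I = {x | ℓ(x) e₀ ∈ O_Kⁿ}` is a
fractional ideal of `Γ`. Conjugating `ρ` by `u ∈ GLₙ(O_K)` does not change `σ` and multiplies `I` by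
an element of `L`. Conversely, if `ρ, ρ'` give the same `σ` and `I' = x₀ I`, then
`ℓ(y) e₀ ↦ ℓ'(x₀ y) e₀` is `K`-linear (as `σ = σ'`), intertwines `ℓ` with `ℓ'` and maps `O_Kⁿ` onto
itself (as `I' = x₀ I`), so its matrix is a unit of `Mₙ(O_K)` conjugating `ρ` into `ρ'`.
-/

namespace Subring

variable {L : Type*} [Field L] [CharZero L] {Γ : Subring L}

theorem exists_int_mul_mem_of_span_rat_eq_top (hΓ : Submodule.span ℚ (Γ : Set L) = ⊤) (x : L) :
    ∃ m : ℤ, m ≠ 0 ∧ (m : L) * x ∈ Γ := by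
  have hx : x ∈ Submodule.span ℚ (Γ : Set L) := hΓ ▸ Submodule.mem_top
  induction hx using Submodule.span_induction with
  | mem y hy => exact ⟨1, one_ne_zero, by simpa using hy⟩
  | zero => exact ⟨1, one_ne_zero, by simp⟩
  | add y z _ _ hy hz =>
    obtain ⟨m, hm, hmy⟩ := hy
    obtain ⟨k, hk, hkz⟩ := hz
    refine ⟨m * k, mul_ne_zero hm hk, ?_⟩
    have h : ((m * k : ℤ) : L) * (y + z) = k * (m * y) + m * (k * z) := by push_cast; ring
    rw [h]
    exact add_mem (mul_mem (intCast_mem Γ k) hmy) (mul_mem (intCast_mem Γ m) hkz)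
  | smul q y _ hy =>
    obtain ⟨m, hm, hmy⟩ := hy
    refine ⟨q.den * m, mul_ne_zero (by exact_mod_cast q.den_nz) hm, ?_⟩
    have h : ((q.den * m : ℤ) : L) * (q • y) = q.num * (m * y) := by
      rw [Rat.smul_def, Rat.cast_def]
      push_cast
      field_simp
    rw [h]
    exact mul_mem (intCast_mem Γ q.num) hmy

theorem isLocalization_of_span_rat_eq_top (hΓ : Submodule.span ℚ (Γ : Set L) = ⊤) :
    IsLocalization (Algebra.algebraMapSubmonoid Γ (nonZeroDivisors ℤ)) L := by
  refine (isLocalization_iff _ _).mpr ⟨?_, fun x => ?_, fun h => ⟨1, ?_⟩⟩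
  · rintro ⟨_, m, hm, rfl⟩
    simpa using nonZeroDivisors.ne_zero hm
  · obtain ⟨m, hm, hmx⟩ := exists_int_mul_mem_of_span_rat_eq_top hΓ x
    exact ⟨(⟨_, hmx⟩, ⟨m, m, mem_nonZeroDivisors_of_ne_zero hm, rfl⟩), mul_comm _ _⟩
  · simpa using Subtype.val_injective h

variable {A : Type*} [Ring A]

theorem ringHom_ext_of_span_rat_eq_top (hΓ : Submodule.span ℚ (Γ : Set L) = ⊤)
    {f g : L →+* A} (h : ∀ γ : Γ, f γ = g γ) : f = g := by
  ext x
  obtain ⟨m, hm, hmx⟩ := exists_int_mul_mem_of_span_rat_eq_top hΓ x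
  have hunit : IsUnit (f m) := (isUnit_iff_ne_zero.mpr (Int.cast_ne_zero.mpr hm)).map f
  apply hunit.mul_left_cancel
  simpa using h ⟨_, hmx⟩

variable [Algebra ℚ A]

/-- Goes through the Ore localization of `Γ` at the nonzero integers, which, unlike
`IsLocalization.lift`, allows a noncommutative target. -/
noncomputable def extendOfSpanRat (hΓ : Submodule.span ℚ (Γ : Set L) = ⊤) (f : Γ →+* A) :
    L →+* A :=
  letI := isLocalization_of_span_rat_eq_top hΓ
  let S := Algebra.algebraMapSubmonoid Γ (nonZeroDivisors ℤ)
  have hS : ∀ s : S, IsUnit (f.toMonoidHom.comp S.subtype s) := by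
    rintro ⟨_, m, hm, rfl⟩
    simpa using ((Int.cast_ne_zero.mpr (nonZeroDivisors.ne_zero hm) : (m : ℚ) ≠ 0).isUnit.map
      (algebraMap ℚ A))
  (OreLocalization.universalHom f (IsUnit.liftRight _ hS) fun _ => rfl).comp
    (IsLocalization.algEquiv S (Localization S) L).symm.toRingEquiv.toRingHom

theorem extendOfSpanRat_coe (hΓ : Submodule.span ℚ (Γ : Set L) = ⊤) (f : Γ →+* A) (γ : Γ) :
    extendOfSpanRat hΓ f γ = f γ := by
  have := isLocalization_of_span_rat_eq_top hΓ
  rw [extendOfSpanRat, RingHom.comp_apply, show (γ : L) = algebraMap Γ L γ from rfl]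
  simp only [RingEquiv.toRingHom_eq_coe, AlgEquiv.toRingEquiv_toRingHom, RingHom.coe_coe,
    AlgEquiv.commutes]
  exact OreLocalization.universalHom_commutes _ _ _

end Subring

open Matrix Module Function

section ScalarEmbedding

variable {L K : Type*} [Field L] [Field K] {n : ℕ} [NeZero n]
  (ℓ : L →+* Matrix (Fin n) (Fin n) K)

noncomputable def scalarEmbedding (h : ∀ c : K, ∃ x, ℓ x = algebraMap K _ c) : K →+* L where
  toFun c := (h c).choose
  map_one' := ℓ.injective <| by rw [(h _).choose_spec, map_one, map_one]
  map_mul' c d := ℓ.injective <| by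
    rw [(h (c * d)).choose_spec, map_mul, map_mul, (h c).choose_spec, (h d).choose_spec]
  map_zero' := ℓ.injective <| by rw [(h _).choose_spec, map_zero, map_zero]
  map_add' c d := ℓ.injective <| by
    rw [(h (c + d)).choose_spec, map_add, map_add, (h c).choose_spec, (h d).choose_spec]

theorem eq_scalarEmbedding_iff (h : ∀ c : K, ∃ x, ℓ x = algebraMap K _ c) {x : L} {c : K} :
    x = scalarEmbedding ℓ h c ↔ ℓ x = algebraMap K _ c :=
  ⟨fun hx => hx ▸ (h c).choose_spec, fun hx => ℓ.injective (hx.trans (h c).choose_spec.symm)⟩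

end ScalarEmbedding

section OrbitMap

variable {L K : Type*} [Field L] [CharZero L] [Field K] [CharZero K] {n : ℕ}
  (ℓ : L →+* Matrix (Fin n) (Fin n) K)

noncomputable def orbitMap (v : Fin n → K) : L →ₗ[ℚ] Fin n → K :=
  ((mulVec.addMonoidHomLeft v).comp ℓ.toAddMonoidHom).toRatLinearMap

@[simp]
theorem orbitMap_apply (v : Fin n → K) (x : L) : orbitMap ℓ v x = ℓ x *ᵥ v := rfl

theorem orbitMap_mul (v : Fin n → K) (x y : L) :
    orbitMap ℓ v (x * y) = ℓ x *ᵥ orbitMap ℓ v y := by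
  simp [mulVec_mulVec]

theorem orbitMap_injective {v : Fin n → K} (hv : v ≠ 0) : Injective (orbitMap ℓ v) := by
  refine (injective_iff_map_eq_zero _).mpr fun x hx => by_contra fun h => hv ?_
  calc v = orbitMap ℓ v (x⁻¹ * x) := by simp [h]
    _ = 0 := by rw [orbitMap_mul, hx, mulVec_zero]

theorem orbitMap_bijective [FiniteDimensional ℚ L] [FiniteDimensional ℚ K]
    (hdim : finrank ℚ L = n * finrank ℚ K) {v : Fin n → K} (hv : v ≠ 0) :
    Bijective (orbitMap ℓ v) :=
  ⟨orbitMap_injective ℓ hv, (LinearMap.injective_iff_surjective_of_finrank_eq_finrank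
    (by simp [finrank_pi_fintype, hdim])).mp (orbitMap_injective ℓ hv)⟩

theorem exists_eq_algebraMap_of_surjective {v : Fin n → K} (hφ : Surjective (orbitMap ℓ v))
    (c : K) : ∃ x, ℓ x = algebraMap K _ c := by
  obtain ⟨x, hx⟩ := hφ (c • v)
  refine ⟨x, ext_iff_mulVec.mpr fun w => ?_⟩
  obtain ⟨y, rfl⟩ := hφ w
  calc ℓ x *ᵥ orbitMap ℓ v y = orbitMap ℓ v (y * x) := by rw [mul_comm, orbitMap_mul]
    _ = c • orbitMap ℓ v y := by rw [orbitMap_mul, hx, mulVec_smul, orbitMap_apply]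
    _ = algebraMap K _ c *ᵥ orbitMap ℓ v y := by
      rw [Algebra.algebraMap_eq_smul_one, smul_mulVec, one_mulVec]

end OrbitMap

section Intertwiner

variable {L K : Type*} [Field L] [CharZero L] [Field K] [CharZero K] {n : ℕ}
  {ℓ ℓ' : L →+* Matrix (Fin n) (Fin n) K} {v : Fin n → K}

noncomputable def orbitTransfer (hφ : Bijective (orbitMap ℓ v))
    (hφ' : Bijective (orbitMap ℓ' v)) {x₀ : L} (hx₀ : x₀ ≠ 0) : (Fin n → K) ≃ₗ[ℚ] Fin n → K :=
  (LinearEquiv.ofBijective _ hφ).symm ≪≫ₗ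
    (LinearEquiv.smulOfNeZero L L x₀ hx₀).restrictScalars ℚ ≪≫ₗ LinearEquiv.ofBijective _ hφ'

variable (hφ : Bijective (orbitMap ℓ v)) (hφ' : Bijective (orbitMap ℓ' v))
  {x₀ : L} (hx₀ : x₀ ≠ 0)

theorem orbitTransfer_orbitMap (y : L) :
    orbitTransfer hφ hφ' hx₀ (orbitMap ℓ v y) = orbitMap ℓ' v (x₀ * y) := by
  simp only [orbitTransfer, LinearEquiv.trans_apply, LinearEquiv.ofBijective_symm_apply_apply]
  rfl

theorem orbitTransfer_mulVec (x : L) (w : Fin n → K) :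
    orbitTransfer hφ hφ' hx₀ (ℓ x *ᵥ w) = ℓ' x *ᵥ orbitTransfer hφ hφ' hx₀ w := by
  obtain ⟨y, rfl⟩ := hφ.surjective w
  rw [← orbitMap_mul, orbitTransfer_orbitMap, orbitTransfer_orbitMap, mul_left_comm,
    orbitMap_mul]

noncomputable def intertwiner
    (hσ : ∀ x c, ℓ x = algebraMap K _ c → ℓ' x = algebraMap K _ c) :
    (Fin n → K) ≃ₗ[K] Fin n → K :=
  (orbitTransfer hφ hφ' hx₀).toAddEquiv.toLinearEquiv fun c w => by
    -- `c • ·` is `ℓ x *ᵥ ·` for some `x`, and `orbitTransfer` turns `ℓ x` into `ℓ' x = c`.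
    obtain ⟨x, hx⟩ := exists_eq_algebraMap_of_surjective ℓ hφ.surjective c
    have smul_eq : ∀ M, M = algebraMap K _ c → ∀ w : Fin n → K, c • w = M *ᵥ w := by
      rintro _ rfl w
      rw [Algebra.algebraMap_eq_smul_one, smul_mulVec, one_mulVec]
    rw [LinearEquiv.coe_toAddEquiv, smul_eq _ hx, smul_eq _ (hσ x c hx)]
    exact orbitTransfer_mulVec hφ hφ' hx₀ x w

theorem intertwiner_apply (hσ : ∀ x c, ℓ x = algebraMap K _ c → ℓ' x = algebraMap K _ c)
    (w : Fin n → K) : intertwiner hφ hφ' hx₀ hσ w = orbitTransfer hφ hφ' hx₀ w := rfl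

end Intertwiner

section IntegralVectors

variable (R K : Type*) [CommRing R] [Field K] [Algebra R K] (n : ℕ)

def integralVectors : Submodule ℤ (Fin n → K) :=
  LinearMap.range (((Algebra.linearMap R K).restrictScalars ℤ).compLeft (Fin n))

variable {R K n}

theorem integralVectors_fg [Module.Finite ℤ R] : (integralVectors R K n).FG := by
  rw [integralVectors, LinearMap.range_eq_map]
  exact Module.Finite.fg_top.map _

theorem single_one_mem_integralVectors (i : Fin n) :
    Pi.single i 1 ∈ integralVectors R K n :=
  ⟨Pi.single i 1, by ext j; simp [Pi.single_apply]⟩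

theorem mapMatrix_mulVec_mem_integralVectors (B : Matrix (Fin n) (Fin n) R) {w : Fin n → K}
    (hw : w ∈ integralVectors R K n) :
    (algebraMap R K).mapMatrix B *ᵥ w ∈ integralVectors R K n := by
  obtain ⟨w₀, rfl⟩ := hw
  exact ⟨B *ᵥ w₀, funext fun i => RingHom.map_mulVec _ _ _ i⟩

theorem mapMatrix_unit_mulVec_mem_integralVectors_iff (u : (Matrix (Fin n) (Fin n) R)ˣ)
    {w : Fin n → K} :
    (algebraMap R K).mapMatrix u *ᵥ w ∈ integralVectors R K n ↔ w ∈ integralVectors R K n := by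
  refine ⟨fun h => ?_, mapMatrix_mulVec_mem_integralVectors _⟩
  simpa [mulVec_mulVec, ← map_mul] using mapMatrix_mulVec_mem_integralVectors (↑u⁻¹) h

theorem exists_mapMatrix_eq_toMatrix' (f : (Fin n → K) →ₗ[K] Fin n → K)
    (hf : ∀ w ∈ integralVectors R K n, f w ∈ integralVectors R K n) :
    ∃ B : Matrix (Fin n) (Fin n) R, (algebraMap R K).mapMatrix B = LinearMap.toMatrix' f := by
  choose col hcol using fun j => hf _ (single_one_mem_integralVectors (R := R) j)
  exact ⟨Matrix.of fun i j => col j i, by ext i j; simp [← hcol]⟩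

theorem exists_unit_mapMatrix_mulVec [FaithfulSMul R K] (e : (Fin n → K) ≃ₗ[K] Fin n → K)
    (he : ∀ w, e w ∈ integralVectors R K n ↔ w ∈ integralVectors R K n) :
    ∃ u : (Matrix (Fin n) (Fin n) R)ˣ, ∀ w, (algebraMap R K).mapMatrix u *ᵥ w = e w ∧
      (algebraMap R K).mapMatrix ↑u⁻¹ *ᵥ w = e.symm w := by
  obtain ⟨B, hB⟩ := exists_mapMatrix_eq_toMatrix' e.toLinearMap fun w => (he w).mpr
  obtain ⟨C, hC⟩ := exists_mapMatrix_eq_toMatrix' e.symm.toLinearMap fun w hw =>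
    (he _).mp (by simpa using hw)
  have hinj : Injective ((algebraMap R K).mapMatrix : Matrix (Fin n) (Fin n) R → _) :=
    Matrix.map_injective (FaithfulSMul.algebraMap_injective R K)
  have hBC : B * C = 1 := hinj <| by
    rw [map_mul, map_one, hB, hC, ← LinearMap.toMatrix'_comp]
    simp
  have hCB : C * B = 1 := hinj <| by
    rw [map_mul, map_one, hB, hC, ← LinearMap.toMatrix'_comp]
    simp
  exact ⟨⟨B, C, hBC, hCB⟩, fun w => by simp [hB, hC]⟩

end IntegralVectors

section FracIdealRel

variable {L : Type*} [Field L] {Γ : Subring L}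

theorem fracIdealRel_iff {I I' : FractionalIdealOf L Γ} :
    FracIdealRel L Γ I I' ↔ ∃ x : L, x ≠ 0 ∧ ∀ z, x * z ∈ I'.1 ↔ z ∈ I.1 := by
  refine exists_congr fun x => and_congr_right fun hx => ⟨fun h z => ?_, fun h y => ?_⟩
  · rw [h]
    exact ⟨fun ⟨z', hz', e⟩ => mul_left_cancel₀ hx e ▸ hz', fun hz => ⟨z, hz, rfl⟩⟩
  · refine ⟨fun hy => ⟨x⁻¹ * y, (h _).mp ?_, (mul_inv_cancel_left₀ hx y).symm⟩, ?_⟩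
    · rwa [mul_inv_cancel_left₀ hx]
    · rintro ⟨z, hz, rfl⟩
      exact (h z).mpr hz

theorem fracIdealRel_equivalence : Equivalence (FracIdealRel L Γ) where
  refl _ := fracIdealRel_iff.mpr ⟨1, one_ne_zero, by simp⟩
  symm h := by
    obtain ⟨x, hx, h⟩ := fracIdealRel_iff.mp h
    exact fracIdealRel_iff.mpr
      ⟨x⁻¹, inv_ne_zero hx, fun z => by rw [← h, mul_inv_cancel_left₀ hx]⟩
  trans h h' := by
    obtain ⟨x, hx, h⟩ := fracIdealRel_iff.mp h
    obtain ⟨x', hx', h'⟩ := fracIdealRel_iff.mp h'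
    exact fracIdealRel_iff.mpr ⟨x' * x, mul_ne_zero hx' hx, fun z => by rw [mul_assoc, h', h]⟩

end FracIdealRel

section GammaStructures

variable {L K R : Type*} [Field L] [CharZero L] [Field K] [CharZero K] [CommRing R]
  [Algebra R K] {Γ : Subring L} (hΓ : Submodule.span ℚ (Γ : Set L) = ⊤) {n : ℕ}

variable (K) in
noncomputable def ratExtension (ρ : Γ →+* Matrix (Fin n) (Fin n) R) :
    L →+* Matrix (Fin n) (Fin n) K :=
  Subring.extendOfSpanRat hΓ ((algebraMap R K).mapMatrix.comp ρ)

theorem ratExtension_coe (ρ : Γ →+* Matrix (Fin n) (Fin n) R) (γ : Γ) :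
    ratExtension K hΓ ρ γ = (algebraMap R K).mapMatrix (ρ γ) :=
  Subring.extendOfSpanRat_coe hΓ _ γ

theorem ratExtension_conj {ρ ρ' : Γ →+* Matrix (Fin n) (Fin n) R}
    (u : (Matrix (Fin n) (Fin n) R)ˣ) (hu : ∀ γ, ρ' γ = u * ρ γ * u⁻¹) (x : L) :
    ratExtension K hΓ ρ' x = (algebraMap R K).mapMatrix u * ratExtension K hΓ ρ x *
      (algebraMap R K).mapMatrix (u⁻¹ : (Matrix (Fin n) (Fin n) R)ˣ) := by
  let uK := Units.map (algebraMap R K).mapMatrix.toMonoidHom u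
  have h := Subring.ringHom_ext_of_span_rat_eq_top hΓ (f := ratExtension K hΓ ρ')
    (g := (MulSemiringAction.toRingHom (ConjAct _) _ (ConjAct.toConjAct uK)).comp
      (ratExtension K hΓ ρ))
    fun γ => by simp [ratExtension_coe, hu, ConjAct.units_smul_def, uK]
  simpa [ConjAct.units_smul_def, uK] using congr($h x)

noncomputable def latticeIdeal (ρ : Γ →+* Matrix (Fin n) (Fin n) R) (v : Fin n → K) :
    Submodule Γ L where
  carrier := {x | orbitMap (ratExtension K hΓ ρ) v x ∈ integralVectors R K n}
  add_mem' hx hy := by simpa only [Set.mem_ofPred_eq, map_add] using add_mem hx hy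
  zero_mem' := by simp only [Set.mem_ofPred_eq, map_zero, zero_mem]
  smul_mem' γ x hx := by
    rw [Set.mem_ofPred_eq, Subring.smul_def, smul_eq_mul, orbitMap_mul, ratExtension_coe]
    exact mapMatrix_mulVec_mem_integralVectors _ hx

variable {ρ : Γ →+* Matrix (Fin n) (Fin n) R} {v : Fin n → K}

theorem mem_latticeIdeal {x : L} :
    x ∈ latticeIdeal hΓ ρ v ↔ orbitMap (ratExtension K hΓ ρ) v x ∈ integralVectors R K n :=
  Iff.rfl

theorem latticeIdeal_ne_bot (hv : v ∈ integralVectors R K n) : latticeIdeal hΓ ρ v ≠ ⊥ :=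
  fun h => one_ne_zero <| (Submodule.mem_bot Γ).mp <| h ▸ (mem_latticeIdeal hΓ).mpr (by simpa)

theorem latticeIdeal_fg [Module.Finite ℤ R] (hv : v ≠ 0) : (latticeIdeal hΓ ρ v).FG := by
  refine Submodule.FG.of_restrictScalars ℤ <| Submodule.fg_of_fg_map_injective
    ((orbitMap (ratExtension K hΓ ρ) v).restrictScalars ℤ) (orbitMap_injective _ hv) ?_
  exact integralVectors_fg.of_le (Submodule.map_le_iff_le_comap.mpr fun _ hx => hx)

variable [NeZero n] [FiniteDimensional ℚ L] [FiniteDimensional ℚ K]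

theorem orbitMap_ratExtension_bijective (hdim : finrank ℚ L = n * finrank ℚ K)
    (ρ : Γ →+* Matrix (Fin n) (Fin n) R) :
    Bijective (orbitMap (ratExtension K hΓ ρ) (Pi.single 0 1)) :=
  orbitMap_bijective _ hdim (Pi.single_ne_zero_iff.mpr one_ne_zero)

theorem exists_mem_latticeIdeal_iff_mul_mem_of_conj (hdim : finrank ℚ L = n * finrank ℚ K)
    {ρ ρ' : Γ →+* Matrix (Fin n) (Fin n) R} (u : (Matrix (Fin n) (Fin n) R)ˣ)
    (hu : ∀ γ, ρ' γ = u * ρ γ * u⁻¹) :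
    ∃ t : L, t ≠ 0 ∧ ∀ y, y ∈ latticeIdeal hΓ ρ' (Pi.single 0 1 : Fin n → K) ↔
      y * t ∈ latticeIdeal hΓ ρ (Pi.single 0 1 : Fin n → K) := by
  set U := (algebraMap R K).mapMatrix (u : Matrix (Fin n) (Fin n) R)
  set U' := (algebraMap R K).mapMatrix (u⁻¹ : (Matrix (Fin n) (Fin n) R)ˣ).1
  have hUU' : U * U' = 1 := by rw [← map_mul, u.mul_inv, map_one]
  -- `t` is chosen with `ℓ(t) e₀ = u⁻¹ e₀`, so that `ℓ'(y) e₀ = u ℓ(y) u⁻¹ e₀ = u ℓ(y t) e₀`.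
  obtain ⟨t, ht⟩ := (orbitMap_ratExtension_bijective hΓ hdim ρ).surjective (U' *ᵥ Pi.single 0 1)
  refine ⟨t, fun ht0 => ?_, fun y => ?_⟩
  · refine (Pi.single_ne_zero_iff.mpr one_ne_zero : (Pi.single 0 1 : Fin n → K) ≠ 0) ?_
    rw [← one_mulVec (Pi.single 0 1), ← hUU', ← mulVec_mulVec, ← ht, ht0, map_zero, mulVec_zero]
  · rw [mem_latticeIdeal, mem_latticeIdeal, orbitMap_apply, ratExtension_conj hΓ u hu,
      ← mulVec_mulVec, ← mulVec_mulVec, ← ht, ← orbitMap_mul,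
      mapMatrix_unit_mulVec_mem_integralVectors_iff]

variable [Module.Finite ℤ R] (hdim : finrank ℚ L = n * finrank ℚ K)

/-- `(σ, [I])` for the first standard basis vector `e₀ = Pi.single 0 1`. -/
noncomputable def structureInvariant (ρ : Γ →+* Matrix (Fin n) (Fin n) R) :
    (K →+* L) × Quot (FracIdealRel L Γ) :=
  (scalarEmbedding (ratExtension K hΓ ρ) (exists_eq_algebraMap_of_surjective _
      (orbitMap_ratExtension_bijective hΓ hdim ρ).surjective),
    Quot.mk _ ⟨latticeIdeal hΓ ρ (Pi.single 0 1 : Fin n → K),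
      latticeIdeal_ne_bot hΓ (single_one_mem_integralVectors 0),
      latticeIdeal_fg hΓ (Pi.single_ne_zero_iff.mpr one_ne_zero)⟩)

theorem structureInvariant_eq_of_conjRel {ρ ρ' : Γ →+* Matrix (Fin n) (Fin n) R}
    (h : ConjRel Γ _ ρ ρ') : structureInvariant hΓ hdim ρ = structureInvariant hΓ hdim ρ' := by
  obtain ⟨u, hu⟩ := h
  simp only [structureInvariant, Prod.mk.injEq]
  refine ⟨RingHom.ext fun c => (eq_scalarEmbedding_iff _ _).mpr ?_, Quot.sound ?_⟩
  · rw [ratExtension_conj hΓ u hu, (eq_scalarEmbedding_iff _ _).mp rfl, ← Algebra.commutes,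
      mul_assoc, ← map_mul, u.mul_inv, map_one, mul_one]
  · obtain ⟨t, ht0, ht⟩ := exists_mem_latticeIdeal_iff_mul_mem_of_conj hΓ hdim u hu
    refine fracIdealRel_iff.mpr ⟨t⁻¹, inv_ne_zero ht0, fun z => ?_⟩
    rw [ht, mul_right_comm, inv_mul_cancel₀ ht0, one_mul]

theorem conjRel_of_structureInvariant_eq [FaithfulSMul R K]
    {ρ ρ' : Γ →+* Matrix (Fin n) (Fin n) R}
    (h : structureInvariant hΓ hdim ρ = structureInvariant hΓ hdim ρ') : ConjRel Γ _ ρ ρ' := by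
  simp only [structureInvariant, Prod.mk.injEq] at h
  obtain ⟨hσ, hI⟩ := h
  obtain ⟨x₀, hx₀, hx₀I⟩ := fracIdealRel_iff.mp
    (fracIdealRel_equivalence.eqvGen_iff.mp (Quot.eqvGen_exact hI))
  set ℓ := ratExtension K hΓ ρ
  set ℓ' := ratExtension K hΓ ρ'
  have hφ := orbitMap_ratExtension_bijective hΓ hdim ρ
  have hφ' := orbitMap_ratExtension_bijective hΓ hdim ρ'
  have hscalar : ∀ x c, ℓ x = algebraMap K _ c → ℓ' x = algebraMap K _ c := fun x c hx =>
    (eq_scalarEmbedding_iff ℓ' (exists_eq_algebraMap_of_surjective _ hφ'.surjective)).mp <|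
      ((eq_scalarEmbedding_iff ℓ (exists_eq_algebraMap_of_surjective _ hφ.surjective)).mpr
        hx).trans (RingHom.congr_fun hσ c)
  set e := intertwiner hφ hφ' hx₀ hscalar
  have he : ∀ w, e w ∈ integralVectors R K n ↔ w ∈ integralVectors R K n := fun w => by
    obtain ⟨y, rfl⟩ := hφ.surjective w
    rw [intertwiner_apply, orbitTransfer_orbitMap]
    exact hx₀I y
  obtain ⟨u, hu⟩ := exists_unit_mapMatrix_mulVec e he
  refine ⟨u, fun γ => Matrix.map_injective (FaithfulSMul.algebraMap_injective R K) ?_⟩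
  change (algebraMap R K).mapMatrix _ = (algebraMap R K).mapMatrix _
  rw [map_mul, map_mul, ← ratExtension_coe hΓ, ← ratExtension_coe hΓ, ext_iff_mulVec]
  intro w
  rw [← mulVec_mulVec, ← mulVec_mulVec, (hu w).2, (hu _).1, intertwiner_apply,
    orbitTransfer_mulVec, ← intertwiner_apply hφ hφ' hx₀ hscalar, e.apply_symm_apply]

end GammaStructures

theorem gammaStructures_inject_into_ringHoms_times_idealClasses_general
    (L K : Type*) [Field L] [NumberField L] [Field K] [NumberField K] [Algebra K L]
    (Γ : Subring L)
    (hΓspan : Submodule.span ℚ (Γ : Set L) = ⊤)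
    (n : ℕ) (hn : n = Module.finrank K L) :
    ∃ f : Quot (ConjRel Γ (Matrix (Fin n) (Fin n) (𝓞 K))) →
        (K →+* L) × Quot (FracIdealRel L Γ),
      Function.Injective f := by
  have : NeZero n := ⟨hn ▸ Module.finrank_pos.ne'⟩
  have hdim : finrank ℚ L = n * finrank ℚ K := by
    rw [hn, ← finrank_mul_finrank ℚ K L, mul_comm]
  refine ⟨Quot.lift (structureInvariant hΓspan hdim)
    fun _ _ => structureInvariant_eq_of_conjRel hΓspan hdim, ?_⟩
  rintro ⟨ρ⟩ ⟨ρ'⟩ h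
  exact Quot.sound (conjRel_of_structureInvariant_eq hΓspan hdim h)

/-- Let `L` be a number field, `Γ` an order of `L`, `K ⊆ L` a subfield
with ring of integers `O_K`, `n = [L:K]`, and `R = Mₙ(O_K)`.  There is an injective map
from the set of `Γ`-structures on `R` (ring homomorphisms `Γ → R` modulo conjugation by
units of `R`) into the product of the set of ring homomorphisms `K → L` with the set
`C_Γ` of equivalence classes of fractional ideals of `Γ`. -/
theorem gammaStructures_inject_into_ringHoms_times_idealClasses
    (L K : Type*) [Field L] [NumberField L] [Field K] [NumberField K] [Algebra K L]
    (Γ : Subring L) (hΓfin : Module.Finite ℤ Γ)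
    (hΓspan : Submodule.span ℚ (Γ : Set L) = ⊤)
    (n : ℕ) (hn : n = Module.finrank K L) :
    ∃ f : Quot (ConjRel Γ (Matrix (Fin n) (Fin n) (𝓞 K))) →
        (K →+* L) × Quot (FracIdealRel L Γ),
      Function.Injective f :=
  gammaStructures_inject_into_ringHoms_times_idealClasses_general L K Γ hΓspan n hn
end

section
/- Let Ω be an associative unital ℚ-algebra, let R and R' be subrings of Ω, let d ≥ 1 be an integer with d·R' ⊆ R and d·R ⊆ R', let Γ be an order of a number field L, and let Γ' = ℤ[dΓ]. Then the number of Γ-structures on R is at most |R'/dR'| times the number of Γ'-structures on R', where |R'/dR'| is the cardinality of the additive quotient group R'/dR'. -/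
/-!
Restricting `ρ : Γ → R` to `Γ' = ℤ[dΓ]` lands in `R'`, since `ρ(dγ) = d ρ(γ) ∈ dR ⊆ R'`. Send the
class of `ρ` to the class of its restriction together with the residue mod `dR'` of a unit
`u ∈ R'ˣ` conjugating the restriction to a fixed representative `σ` of its class. This is
injective: if `ρ₁, ρ₂` give the same pair, then `d ρᵢ(γ) = ρᵢ(dγ) = uᵢ σ(dγ) uᵢ⁻¹`, and
`w = u₂ u₁⁻¹ ∈ 1 + dR' ⊆ R` is a unit of `R` (with inverse `u₁ u₂⁻¹ ∈ 1 + dR'`) conjugating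
`d ρ₁` into `d ρ₂`; as `d` is invertible in the `ℚ`-algebra `Ω`, it conjugates `ρ₁` into `ρ₂`.
-/

universe u v

/-- The additive subgroup `d·R` of (the subring) `R`. -/
def multiplesSubgroup (Ω : Type*) [Ring Ω] (R : Subring Ω) (d : ℕ) : AddSubgroup ↥R :=
  AddMonoidHom.range (d • AddMonoidHom.id ↥R)

theorem conjRel_equivalence (A B : Type*) [Ring A] [Ring B] : Equivalence (ConjRel A B) where
  refl _ := ⟨1, by simp⟩
  symm := by
    rintro ρ ρ' ⟨u, hu⟩
    exact ⟨u⁻¹, fun a => by simp [hu a, mul_assoc]⟩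
  trans := by
    rintro ρ₁ ρ₂ ρ₃ ⟨u, hu⟩ ⟨v, hv⟩
    exact ⟨v * u, fun a => by simp [hv a, hu a, mul_assoc]⟩

theorem conjRel_out_mk {A B : Type*} [Ring A] [Ring B] (ρ : A →+* B) :
    ConjRel A B (Quot.mk (ConjRel A B) ρ).out ρ :=
  (conjRel_equivalence A B).eqvGen_iff.1 (Quot.eq.1 (Quot.out_eq _))

theorem natCast_mul_injective_of_algebra_rat {Ω : Type*} [Ring Ω] [Algebra ℚ Ω] {d : ℕ}
    (hd : d ≠ 0) : Function.Injective fun x : Ω => (d : Ω) * x := by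
  have hunit : IsUnit (d : Ω) := by
    simpa using (isUnit_iff_ne_zero.2 (Nat.cast_ne_zero.2 hd : (d : ℚ) ≠ 0)).map (algebraMap ℚ Ω)
  exact fun x y h => hunit.mul_left_cancel h

section Units

variable {Ω : Type*} [Ring Ω] {R R' : Subring Ω} {d : ℕ}

theorem exists_units_map_eq_of_mem (x : Ωˣ) (hx : (x : Ω) ∈ R) (hx' : (↑x⁻¹ : Ω) ∈ R) :
    ∃ w : Rˣ, Units.map R.subtype.toMonoidHom w = x :=
  ⟨⟨⟨_, hx⟩, ⟨_, hx'⟩, Subtype.ext x.mul_inv, Subtype.ext x.inv_mul⟩, Units.ext rfl⟩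

theorem coe_units_map_mul_inv_mem (hdR' : ∀ x ∈ R', (d : Ω) * x ∈ R) {u v : R'ˣ}
    (h : (QuotientAddGroup.mk (v : R') : R' ⧸ multiplesSubgroup Ω R' d) =
      QuotientAddGroup.mk (u : R')) :
    ((Units.map R'.subtype.toMonoidHom u * (Units.map R'.subtype.toMonoidHom v)⁻¹ : Ωˣ) : Ω) ∈
      R := by
  obtain ⟨r, hr⟩ := QuotientAddGroup.eq.1 h
  have hu : (u : R') = v + d • r := by
    simpa using (eq_neg_add_iff_add_eq.1 hr).symm
  have : ((Units.map R'.subtype.toMonoidHom u * (Units.map R'.subtype.toMonoidHom v)⁻¹ : Ωˣ) : Ω)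
      = 1 + d * ((r : Ω) * (↑v⁻¹ : R')) := by
    have hv : ((v : R') : Ω) * (↑v⁻¹ : R') = 1 := congrArg Subtype.val v.mul_inv
    simp [hu, add_mul, nsmul_eq_mul, mul_assoc, hv]
  rw [this]
  exact R.add_mem R.one_mem (hdR' _ (R'.mul_mem r.2 (↑v⁻¹ : R').2))

theorem exists_units_map_eq_mul_inv (hdR' : ∀ x ∈ R', (d : Ω) * x ∈ R) {u v : R'ˣ}
    (h : (QuotientAddGroup.mk (v : R') : R' ⧸ multiplesSubgroup Ω R' d) =
      QuotientAddGroup.mk (u : R')) :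
    ∃ w : Rˣ, Units.map R.subtype.toMonoidHom w =
      Units.map R'.subtype.toMonoidHom u * (Units.map R'.subtype.toMonoidHom v)⁻¹ := by
  refine exists_units_map_eq_of_mem _ (coe_units_map_mul_inv_mem hdR' h) ?_
  rw [mul_inv_rev, inv_inv]
  exact coe_units_map_mul_inv_mem hdR' h.symm

end Units

section Restriction

variable {Ω : Type*} [Ring Ω] {R R' : Subring Ω} {d : ℕ}
variable {L : Type*} [Ring L] {Γ Γ' : Subring L}

theorem closure_natCast_mul_le (Γ : Subring L) (d : ℕ) :
    Subring.closure ((fun γ : L => (d : L) * γ) '' Γ) ≤ Γ :=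
  Subring.closure_le.2 <| by
    rintro _ ⟨γ, hγ, rfl⟩
    exact Γ.mul_mem (natCast_mem Γ d) hγ

theorem map_mem_of_mem_closure_natCast_mul (hdR : ∀ x ∈ R, (d : Ω) * x ∈ R') (ρ : Γ →+* R)
    {x : Γ} (hx : (x : L) ∈ Subring.closure ((fun γ : L => (d : L) * γ) '' Γ)) :
    (ρ x : Ω) ∈ R' := by
  have hle : Subring.closure ((fun γ : L => (d : L) * γ) '' Γ) ≤
      (R'.comap (R.subtype.comp ρ)).map Γ.subtype := by
    refine Subring.closure_le.2 ?_
    rintro _ ⟨γ, hγ, rfl⟩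
    refine ⟨d • ⟨γ, hγ⟩, ?_, by simp [nsmul_eq_mul]⟩
    simpa [nsmul_eq_mul] using hdR _ (ρ ⟨γ, hγ⟩).2
  obtain ⟨y, hy, hyx⟩ := hle hx
  rwa [show x = y from Subtype.ext hyx.symm]

variable (hΓ' : Γ' ≤ Subring.closure ((fun γ : L => (d : L) * γ) '' Γ))
  (hdR : ∀ x ∈ R, (d : Ω) * x ∈ R')

def restrictHom (ρ : Γ →+* R) : Γ' →+* R' :=
  RingHom.codRestrict
    ((R.subtype.comp ρ).comp (Subring.inclusion (hΓ'.trans (closure_natCast_mul_le Γ d)))) R'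
    fun x => map_mem_of_mem_closure_natCast_mul hdR ρ (hΓ' x.2)

theorem coe_restrictHom_natCast_mul (ρ : Γ →+* R) (γ : Γ) (hγ : (d : L) * γ ∈ Γ') :
    (restrictHom hΓ' hdR ρ ⟨_, hγ⟩ : Ω) = d * ρ γ := by
  have : Subring.inclusion (hΓ'.trans (closure_natCast_mul_le Γ d)) ⟨_, hγ⟩ = d • γ :=
    Subtype.ext (by simp [nsmul_eq_mul])
  change (ρ (Subring.inclusion _ ⟨_, hγ⟩) : Ω) = _
  rw [this, map_nsmul, nsmul_eq_mul, Subring.coe_mul, Subring.coe_natCast]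

theorem natCast_mul_eq_conj_of_restrictHom_eq (hdΓ : ∀ γ ∈ Γ, (d : L) * γ ∈ Γ')
    {ρ : Γ →+* R} {σ : Γ' →+* R'} {u : R'ˣ}
    (h : ∀ a, restrictHom hΓ' hdR ρ a = u * σ a * ↑u⁻¹) (γ : Γ) :
    (d : Ω) * ρ γ = (u : R') * σ ⟨_, hdΓ γ γ.2⟩ * (↑u⁻¹ : R') := by
  rw [← coe_restrictHom_natCast_mul hΓ' hdR ρ γ (hdΓ γ γ.2), h]
  simp

theorem conjRel_of_restrictHom_eq_conj [Algebra ℚ Ω] (hd : d ≠ 0)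
    (hdΓ : ∀ γ ∈ Γ, (d : L) * γ ∈ Γ') (hdR' : ∀ x ∈ R', (d : Ω) * x ∈ R)
    {ρ₁ ρ₂ : Γ →+* R} {σ : Γ' →+* R'} {u₁ u₂ : R'ˣ}
    (h₁ : ∀ a, restrictHom hΓ' hdR ρ₁ a = u₁ * σ a * ↑u₁⁻¹)
    (h₂ : ∀ a, restrictHom hΓ' hdR ρ₂ a = u₂ * σ a * ↑u₂⁻¹)
    (hu : (QuotientAddGroup.mk (u₁ : R') : R' ⧸ multiplesSubgroup Ω R' d) =
      QuotientAddGroup.mk (u₂ : R')) :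
    ConjRel Γ R ρ₁ ρ₂ := by
  obtain ⟨w, hw⟩ := exists_units_map_eq_mul_inv hdR' hu
  have hw_val : ((w : R) : Ω) = (u₂ : R') * (↑u₁⁻¹ : R') := congrArg Units.val hw
  have hw_inv : ((↑w⁻¹ : R) : Ω) = (u₁ : R') * (↑u₂⁻¹ : R') := by
    simpa using congrArg (fun x : Ωˣ => ((x⁻¹ : Ωˣ) : Ω)) hw
  have hu₁ : ∀ x : Ω, ((↑u₁⁻¹ : R') : Ω) * ((u₁ : R') * x) = x := fun x => by
    rw [← mul_assoc, ← Subring.coe_mul, u₁.inv_mul, OneMemClass.coe_one, one_mul]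
  refine ⟨w, fun γ => Subtype.ext (natCast_mul_injective_of_algebra_rat hd ?_)⟩
  have e₁ := natCast_mul_eq_conj_of_restrictHom_eq hΓ' hdR hdΓ h₁ γ
  have e₂ := natCast_mul_eq_conj_of_restrictHom_eq hΓ' hdR hdΓ h₂ γ
  calc (d : Ω) * ρ₂ γ = (u₂ : R') * σ ⟨_, hdΓ γ γ.2⟩ * (↑u₂⁻¹ : R') := e₂
    _ = w * ((u₁ : R') * σ ⟨_, hdΓ γ γ.2⟩ * (↑u₁⁻¹ : R')) * ↑w⁻¹ := by
      rw [hw_val, hw_inv]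
      simp only [mul_assoc, hu₁]
    _ = w * ((d : Ω) * ρ₁ γ) * ↑w⁻¹ := by rw [e₁]
    _ = d * ↑(↑w * ρ₁ γ * ↑w⁻¹) := by
      rw [← mul_assoc, ← (Nat.cast_commute d _).eq]
      simp only [Subring.coe_mul, mul_assoc]

end Restriction

theorem card_gammaStructures_le_mul_general
    (Ω : Type u) [Ring Ω] [Algebra ℚ Ω] (R R' : Subring Ω)
    (L : Type v) [Field L]
    (Γ : Subring L)
    (d : ℕ) (hd : 1 ≤ d)
    (hdR' : ∀ x ∈ R', (d : Ω) * x ∈ R) (hdR : ∀ x ∈ R, (d : Ω) * x ∈ R')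
    (Γ' : Subring L) (hΓ' : Γ' = Subring.closure ((fun γ : L => (d : L) * γ) '' (Γ : Set L))) :
    Cardinal.mk (Quot (ConjRel Γ R)) ≤
      Cardinal.lift.{v} (Cardinal.mk (↥R' ⧸ multiplesSubgroup Ω R' d)) *
        Cardinal.mk (Quot (ConjRel Γ' R')) := by
  have hdΓ : ∀ γ ∈ Γ, (d : L) * γ ∈ Γ' := fun γ hγ => hΓ' ▸ Subring.subset_closure ⟨γ, hγ, rfl⟩
  let res := restrictHom hΓ'.le hdR
  choose U hU using fun c : Quot (ConjRel Γ R) => conjRel_out_mk (res c.out)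
  let F (c : Quot (ConjRel Γ R)) : (R' ⧸ multiplesSubgroup Ω R' d) × Quot (ConjRel Γ' R') :=
    (QuotientAddGroup.mk (U c : R'), Quot.mk _ (res c.out))
  have hF : Function.Injective F := by
    intro c₁ c₂ h
    obtain ⟨hu, hσ⟩ := Prod.ext_iff.1 h
    have hU₂ := hU c₂
    rw [← show Quot.mk _ (res c₁.out) = Quot.mk _ (res c₂.out) from hσ] at hU₂
    rw [← Quot.out_eq c₁, ← Quot.out_eq c₂]
    exact Quot.sound <|
      conjRel_of_restrictHom_eq_conj _ hdR (Nat.one_le_iff_ne_zero.1 hd) hdΓ hdR' (hU c₁) hU₂ hu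
  have hcard := Cardinal.mk_le_of_injective hF
  rwa [Cardinal.mk_prod, Cardinal.lift_umax.{u, v}, Cardinal.lift_id'.{u, v}] at hcard

/-- Let `Ω` be an associative unital `ℚ`-algebra, `R` and `R'`
subrings of `Ω`, `d ≥ 1` an integer with `d·R' ⊆ R` and `d·R ⊆ R'`, `Γ` an order of a
number field `L`, and `Γ' = ℤ[dΓ]`.  Then the number of `Γ`-structures on `R` is at
most `|R'/dR'|` times the number of `Γ'`-structures on `R'`. -/
theorem card_gammaStructures_le_mul
    (Ω : Type u) [Ring Ω] [Algebra ℚ Ω] (R R' : Subring Ω)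
    (L : Type v) [Field L] [NumberField L]
    (Γ : Subring L) (hΓfin : Module.Finite ℤ Γ)
    (hΓspan : Submodule.span ℚ (Γ : Set L) = ⊤)
    (d : ℕ) (hd : 1 ≤ d)
    (hdR' : ∀ x ∈ R', (d : Ω) * x ∈ R) (hdR : ∀ x ∈ R, (d : Ω) * x ∈ R')
    (Γ' : Subring L) (hΓ' : Γ' = Subring.closure ((fun γ : L => (d : L) * γ) '' (Γ : Set L))) :
    Cardinal.mk (Quot (ConjRel Γ R)) ≤
      Cardinal.lift.{v} (Cardinal.mk (↥R' ⧸ multiplesSubgroup Ω R' d)) *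
        Cardinal.mk (Quot (ConjRel Γ' R')) :=
  card_gammaStructures_le_mul_general Ω R R' L Γ d hd hdR' hdR Γ' hΓ'
end
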